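/- arXiv:0707.2921 — 5 statements merged into one kernel-verified Lean document; each statement's English description precedes it below -/
import Mathlib

section
/- KKT solution of LRP′: suppose κ₁ ≤ κ₂ ≤ … ≤ κ_q and suppose there exists h with 1 ≤ h ≤ q such that λ* := (1 + ∑_{i=1}^{h} κᵢ/(2bᵢ)) / (∑_{i=1}^{h} 1/(2bᵢ)) satisfies κ_h < λ* ≤ κ_{h+1} (the right inequality vacuous if h = q). Then xᵢ* = (λ* − κᵢ)/(2bᵢ) for i ≤ h and xᵢ* = 0 for i > h is an optimal solution of min { ∑ᵢ (bᵢxᵢ² + κᵢxᵢ) : ∑ xᵢ = 1, x ≥ 0 }. -/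
open Finset

theorem kkt_solution_LRP'
    (q : ℕ) (hq : 1 ≤ q) (b κ : ℕ → ℝ)
    (hb : ∀ i ∈ Finset.Icc 1 q, 0 < b i)
    (hκ0 : ∀ i ∈ Finset.Icc 1 q, 0 ≤ κ i)
    (hκmono : ∀ i j, 1 ≤ i → i ≤ j → j ≤ q → κ i ≤ κ j)
    (h : ℕ) (hh1 : 1 ≤ h) (hhq : h ≤ q)
    (lam : ℝ)
    (hlam : lam = (1 + ∑ i ∈ Finset.Icc 1 h, κ i / (2 * b i)) /
        (∑ i ∈ Finset.Icc 1 h, 1 / (2 * b i)))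
    (hlow : κ h < lam) (hup : h < q → lam ≤ κ (h + 1))
    (xstar : ℕ → ℝ)
    (hxstar : ∀ i, xstar i = if i ≤ h then (lam - κ i) / (2 * b i) else 0) :
    ((∀ i ∈ Finset.Icc 1 q, 0 ≤ xstar i) ∧ ∑ i ∈ Finset.Icc 1 q, xstar i = 1) ∧
    (∀ x : ℕ → ℝ, (∀ i ∈ Finset.Icc 1 q, 0 ≤ x i) →
      (∑ i ∈ Finset.Icc 1 q, x i = 1) →
      ∑ i ∈ Finset.Icc 1 q, (b i * (xstar i) ^ 2 + κ i * xstar i) ≤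
        ∑ i ∈ Finset.Icc 1 q, (b i * (x i) ^ 2 + κ i * x i)) := by
  have hbi : ∀ i ∈ Finset.Icc 1 h, (0:ℝ) < b i := fun i hi => by
    have hi' := Finset.mem_Icc.mp hi
    exact hb i (Finset.mem_Icc.mpr ⟨hi'.1, le_trans hi'.2 hhq⟩)
  have hS : 0 < ∑ i ∈ Finset.Icc 1 h, 1 / (2 * b i) := by
    apply Finset.sum_pos
    · intro i hi
      have := hbi i hi
      positivity
    · exact Finset.nonempty_Icc.mpr hh1
  have hlamS : lam * (∑ i ∈ Finset.Icc 1 h, 1 / (2 * b i))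
      = 1 + ∑ i ∈ Finset.Icc 1 h, κ i / (2 * b i) := by
    rw [hlam, div_mul_cancel₀ _ (ne_of_gt hS)]
  have hpos : ∀ i, 1 ≤ i → i ≤ h → 0 < lam - κ i := by
    intro i h1 h2
    have := hκmono i h h1 h2 hhq
    linarith
  have hnn : ∀ i ∈ Finset.Icc 1 q, 0 ≤ xstar i := by
    intro i hi
    have hi' := Finset.mem_Icc.mp hi
    rw [hxstar]
    split
    · next hih =>
      have h1 := hpos i hi'.1 hih
      have h2 := hb i hi
      positivity
    · exact le_refl 0
  have hsub : Finset.Icc 1 h ⊆ Finset.Icc 1 q := Finset.Icc_subset_Icc_right hhq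
  have hsum1 : ∑ i ∈ Finset.Icc 1 q, xstar i = 1 := by
    rw [← Finset.sum_subset hsub (fun i hi hni => by
      rw [hxstar, if_neg]
      intro hih
      exact hni (Finset.mem_Icc.mpr ⟨(Finset.mem_Icc.mp hi).1, hih⟩))]
    have : ∀ i ∈ Finset.Icc 1 h,
        xstar i = lam * (1 / (2 * b i)) - κ i / (2 * b i) := by
      intro i hi
      have hi' := Finset.mem_Icc.mp hi
      rw [hxstar, if_pos hi'.2]
      ring
    rw [Finset.sum_congr rfl this, Finset.sum_sub_distrib, ← Finset.mul_sum, hlamS]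
    ring
  refine ⟨⟨hnn, hsum1⟩, ?_⟩
  intro x hx hxsum
  have key : ∀ i ∈ Finset.Icc 1 q,
      b i * (xstar i) ^ 2 + κ i * xstar i - lam * xstar i ≤
      b i * (x i) ^ 2 + κ i * x i - lam * x i := by
    intro i hi
    have hi' := Finset.mem_Icc.mp hi
    have hbp := hb i hi
    by_cases hih : i ≤ h
    · have hxs : xstar i = (lam - κ i) / (2 * b i) := by rw [hxstar, if_pos hih]
      have ht : 2 * b i * xstar i = lam - κ i := by
        rw [hxs]; field_simp
      have iden : b i * (x i) ^ 2 + κ i * x i - lam * x i -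
          (b i * (xstar i) ^ 2 + κ i * xstar i - lam * xstar i) =
          b i * (x i - xstar i) ^ 2 := by
        linear_combination (x i - xstar i) * ht
      have := mul_nonneg hbp.le (sq_nonneg (x i - xstar i))
      linarith
    · have hxs : xstar i = 0 := by rw [hxstar, if_neg hih]
      have hhlt : h < i := Nat.lt_of_not_le hih
      have hκi : lam ≤ κ i := by
        have h1 := hup (lt_of_lt_of_le hhlt hi'.2)
        have h2 := hκmono (h+1) i (by omega) hhlt hi'.2
        linarith
      have hxnn := hx i hi
      rw [hxs]
      nlinarith [mul_nonneg hbp.le (sq_nonneg (x i))]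
  have hsumkey := Finset.sum_le_sum key
  rw [Finset.sum_sub_distrib, Finset.sum_sub_distrib, ← Finset.mul_sum, ← Finset.mul_sum,
    hsum1, hxsum] at hsumkey
  linarith
end

section
/- Existence of the threshold index: with κ₁ ≤ … ≤ κ_q (κᵢ ≥ 0) and bᵢ > 0, there exists h ∈ {1,…,q} such that λ(h) := (1 + ∑_{i=1}^{h} κᵢ/(2bᵢ))/(∑_{i=1}^{h} 1/(2bᵢ)) satisfies κ_h < λ(h), and λ(h) ≤ κ_{h+1} if h < q. -/
open Finset

theorem threshold_index_exists
    (q : ℕ) (hq : 1 ≤ q) (b κ : ℕ → ℝ)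
    (hb : ∀ i ∈ Finset.Icc 1 q, 0 < b i)
    (hκ0 : ∀ i ∈ Finset.Icc 1 q, 0 ≤ κ i)
    (hκmono : ∀ i j, 1 ≤ i → i ≤ j → j ≤ q → κ i ≤ κ j) :
    ∃ h : ℕ, 1 ≤ h ∧ h ≤ q ∧
      κ h < (1 + ∑ i ∈ Finset.Icc 1 h, κ i / (2 * b i)) /
          (∑ i ∈ Finset.Icc 1 h, 1 / (2 * b i)) ∧
      (h < q → (1 + ∑ i ∈ Finset.Icc 1 h, κ i / (2 * b i)) /
          (∑ i ∈ Finset.Icc 1 h, 1 / (2 * b i)) ≤ κ (h + 1)) := by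
  classical
  set P : ℕ → Prop := fun h =>
    κ h * (∑ i ∈ Finset.Icc 1 h, 1 / (2 * b i)) <
      1 + ∑ i ∈ Finset.Icc 1 h, κ i / (2 * b i) with hPdef
  have hSpos : ∀ h, 1 ≤ h → h ≤ q → 0 < ∑ i ∈ Finset.Icc 1 h, 1 / (2 * b i) := by
    intro h h1 hhq
    apply Finset.sum_pos
    · intro i hi
      rw [Finset.mem_Icc] at hi
      have := hb i (Finset.mem_Icc.mpr ⟨hi.1, hi.2.trans hhq⟩)
      positivity
    · exact ⟨1, Finset.mem_Icc.mpr ⟨le_refl 1, h1⟩⟩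
  have hP1 : P 1 := by
    have hb1 : 0 < b 1 := hb 1 (Finset.mem_Icc.mpr ⟨le_refl 1, hq⟩)
    simp only [hPdef, Finset.Icc_self, Finset.sum_singleton]
    have h1 : κ 1 * (1 / (2 * b 1)) = κ 1 / (2 * b 1) := by ring
    linarith
  set h := Nat.findGreatest P q with hhdef
  have hh1 : 1 ≤ h := Nat.le_findGreatest hq hP1
  have hhq : h ≤ q := Nat.findGreatest_le q
  have hPh : P h := Nat.findGreatest_spec hq hP1
  have hSh := hSpos h hh1 hhq
  refine ⟨h, hh1, hhq, ?_, ?_⟩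
  · rw [lt_div_iff₀ hSh]
    exact hPh
  · intro hlt
    have hnP : ¬ P (h + 1) :=
      Nat.findGreatest_is_greatest (Nat.lt_succ_self h) hlt
    rw [hPdef] at hnP
    push_neg at hnP
    have hbpos : 0 < b (h + 1) := hb _ (Finset.mem_Icc.mpr ⟨by omega, by omega⟩)
    have hsS : (∑ i ∈ Finset.Icc 1 (h + 1), 1 / (2 * b i)) =
        (∑ i ∈ Finset.Icc 1 h, 1 / (2 * b i)) + 1 / (2 * b (h + 1)) :=
      Finset.sum_Icc_succ_top (by omega) _
    have hsN : (∑ i ∈ Finset.Icc 1 (h + 1), κ i / (2 * b i)) =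
        (∑ i ∈ Finset.Icc 1 h, κ i / (2 * b i)) + κ (h + 1) / (2 * b (h + 1)) :=
      Finset.sum_Icc_succ_top (by omega) _
    rw [hsS, hsN] at hnP
    have hmul : κ (h + 1) * (1 / (2 * b (h + 1))) = κ (h + 1) / (2 * b (h + 1)) := by ring
    rw [div_le_iff₀ hSh]
    nlinarith [hnP, hmul]
end

section
/- Prefix support property: in any optimal solution x* of min { ∑_{i=1}^q (bᵢxᵢ² + κᵢxᵢ) : ∑ xᵢ = 1, x ≥ 0 } with κ₁ ≤ … ≤ κ_q, if xⱼ* > 0 and i < j with bᵢ = bⱼ, then xᵢ* > 0. More strongly, if κᵢ < κⱼ and xⱼ* > 0 then xᵢ* > 0. -/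
open Finset

lemma prefix_support_key
    (q : ℕ) (b κ : ℕ → ℝ)
    (hb : ∀ i ∈ Finset.Icc 1 q, 0 < b i)
    (x : ℕ → ℝ)
    (hfeas : (∀ i ∈ Finset.Icc 1 q, 0 ≤ x i) ∧ ∑ i ∈ Finset.Icc 1 q, x i = 1)
    (hopt : ∀ x' : ℕ → ℝ, (∀ i ∈ Finset.Icc 1 q, 0 ≤ x' i) →
      (∑ i ∈ Finset.Icc 1 q, x' i = 1) →
      ∑ i ∈ Finset.Icc 1 q, (b i * (x i) ^ 2 + κ i * x i) ≤
        ∑ i ∈ Finset.Icc 1 q, (b i * (x' i) ^ 2 + κ i * x' i))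
    (i j : ℕ) (hi : i ∈ Finset.Icc 1 q) (hj : j ∈ Finset.Icc 1 q)
    (hij : i ≠ j) (hκ : κ i ≤ κ j) (hxj : 0 < x j) : 0 < x i := by
  by_contra hneg
  have hxi : x i = 0 := le_antisymm (le_of_not_gt hneg) (hfeas.1 i hi)
  have hbi := hb i hi
  have hbj := hb j hj
  set ε : ℝ := min (x j) (b j * x j / (b i + b j)) with hε_def
  have hbsum : 0 < b i + b j := by linarith
  have hε : 0 < ε := lt_min hxj (div_pos (mul_pos hbj hxj) hbsum)
  have hεj : ε ≤ x j := min_le_left _ _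
  have h1 : ε * (b i + b j) ≤ b j * x j := by
    have := min_le_right (x j) (b j * x j / (b i + b j))
    exact (le_div_iff₀ hbsum).mp this
  set x' : ℕ → ℝ := fun k => if k = i then ε else if k = j then x j - ε else x k
    with hx'_def
  have hx'i : x' i = ε := by simp [hx'_def]
  have hx'j : x' j = x j - ε := by simp [hx'_def, hij.symm]
  have hx'other : ∀ k, k ≠ i → k ≠ j → x' k = x k := by
    intro k h1 h2; simp [hx'_def, h1, h2]
  have hsum : ∀ h : ℕ → ℝ, (∀ k, k ≠ i → k ≠ j → h k = 0) →
      ∑ k ∈ Finset.Icc 1 q, h k = h i + h j := by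
    intro h h0
    have hsub : ({i, j} : Finset ℕ) ⊆ Finset.Icc 1 q := by
      intro k hk
      simp only [Finset.mem_insert, Finset.mem_singleton] at hk
      rcases hk with rfl | rfl <;> assumption
    have := Finset.sum_subset hsub (fun k _ hk2 => by
      simp only [Finset.mem_insert, Finset.mem_singleton, not_or] at hk2
      exact h0 k hk2.1 hk2.2)
    rw [← this, Finset.sum_pair hij]
  -- feasibility of x'
  have hnn : ∀ k ∈ Finset.Icc 1 q, 0 ≤ x' k := by
    intro k hk
    by_cases h1 : k = i
    · rw [h1, hx'i]; exact hε.le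
    · by_cases h2 : k = j
      · rw [h2, hx'j]; linarith
      · rw [hx'other k h1 h2]; exact hfeas.1 k hk
  have hsum1 : ∑ k ∈ Finset.Icc 1 q, x' k = 1 := by
    have hd : ∑ k ∈ Finset.Icc 1 q, (x' k - x k) = (x' i - x i) + (x' j - x j) :=
      hsum _ (fun k h1 h2 => by rw [hx'other k h1 h2]; ring)
    rw [Finset.sum_sub_distrib, hfeas.2, hx'i, hx'j, hxi] at hd
    linarith
  -- objective difference
  have hobj := hopt x' hnn hsum1
  have hd : ∑ k ∈ Finset.Icc 1 q,
      ((b k * (x' k) ^ 2 + κ k * x' k) - (b k * (x k) ^ 2 + κ k * x k)) =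
      ((b i * (x' i) ^ 2 + κ i * x' i) - (b i * (x i) ^ 2 + κ i * x i)) +
      ((b j * (x' j) ^ 2 + κ j * x' j) - (b j * (x j) ^ 2 + κ j * x j)) :=
    hsum _ (fun k h1 h2 => by rw [hx'other k h1 h2]; ring)
  rw [Finset.sum_sub_distrib] at hd
  have hD : 0 ≤ ((b i * (x' i) ^ 2 + κ i * x' i) - (b i * (x i) ^ 2 + κ i * x i)) +
      ((b j * (x' j) ^ 2 + κ j * x' j) - (b j * (x j) ^ 2 + κ j * x j)) := by
    rw [← hd]; linarith
  rw [hx'i, hx'j, hxi] at hD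
  nlinarith [mul_le_mul_of_nonneg_left h1 hε.le, mul_pos (mul_pos hbj hxj) hε,
    mul_le_mul_of_nonneg_right hκ hε.le]

theorem prefix_support_property
    (q : ℕ) (hq : 1 ≤ q) (b κ : ℕ → ℝ)
    (hb : ∀ i ∈ Finset.Icc 1 q, 0 < b i)
    (hκ0 : ∀ i ∈ Finset.Icc 1 q, 0 ≤ κ i)
    (hκmono : ∀ i j, 1 ≤ i → i ≤ j → j ≤ q → κ i ≤ κ j)
    (x : ℕ → ℝ)
    (hfeas : (∀ i ∈ Finset.Icc 1 q, 0 ≤ x i) ∧ ∑ i ∈ Finset.Icc 1 q, x i = 1)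
    (hopt : ∀ x' : ℕ → ℝ, (∀ i ∈ Finset.Icc 1 q, 0 ≤ x' i) →
      (∑ i ∈ Finset.Icc 1 q, x' i = 1) →
      ∑ i ∈ Finset.Icc 1 q, (b i * (x i) ^ 2 + κ i * x i) ≤
        ∑ i ∈ Finset.Icc 1 q, (b i * (x' i) ^ 2 + κ i * x' i)) :
    (∀ i j, i ∈ Finset.Icc 1 q → j ∈ Finset.Icc 1 q →
      i < j → b i = b j → 0 < x j → 0 < x i) ∧
    (∀ i j, i ∈ Finset.Icc 1 q → j ∈ Finset.Icc 1 q →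
      κ i < κ j → 0 < x j → 0 < x i) := by
  constructor
  · intro i j hi hj hlt _ hxj
    rw [Finset.mem_Icc] at hi hj
    exact prefix_support_key q b κ hb x hfeas hopt i j
      (Finset.mem_Icc.mpr hi) (Finset.mem_Icc.mpr hj) (Nat.ne_of_lt hlt)
      (hκmono i j hi.1 hlt.le hj.2) hxj
  · intro i j hi hj hκlt hxj
    have hij : i ≠ j := by rintro rfl; exact absurd hκlt (lt_irrefl _)
    exact prefix_support_key q b κ hb x hfeas hopt i j hi hj hij hκlt.le hxj
end

section
/- Optimality of prefix sets in sorted instances: suppose b₁ ≤ b₂ ≤ … ≤ b_q and all fixed costs fᵢ = f are equal. Then there is an optimal solution of P whose set of selected discs is a prefix {1,…,k} for some k. -/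
/-!
For a fixed set `S` of selected discs, Sedrakyan's form of Cauchy–Schwarz bounds the variable
cost below by `(∑_{i ∈ S} 1/bᵢ)⁻¹`, with equality at `xᵢ ∝ 1/bᵢ`. Since the `1/bᵢ` decrease, the
prefix of the same cardinality has the largest `∑ 1/bᵢ`, so every feasible point costs at least
`f k + (∑_{i ≤ k} 1/bᵢ)⁻¹` for `k = |S|`. Minimizing this over `k` and spreading the mass as
`xᵢ ∝ 1/bᵢ` over `{1, …, k}` therefore gives an optimal solution.
-/

open Finset

noncomputable section

namespace DiscSelection

def IsFeasible (q : ℕ) (x y : ℕ → ℝ) : Prop :=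
  (∀ i ∈ Icc 1 q, 0 ≤ x i ∧ x i ≤ y i ∧ (y i = 0 ∨ y i = 1)) ∧ ∑ i ∈ Icc 1 q, x i = 1

def cost (q : ℕ) (f : ℝ) (b x y : ℕ → ℝ) : ℝ :=
  ∑ i ∈ Icc 1 q, (f * y i + b i * x i ^ 2)

def selected (q : ℕ) (y : ℕ → ℝ) : Finset ℕ :=
  {i ∈ Icc 1 q | y i = 1}

def prefixValue (f : ℝ) (b : ℕ → ℝ) (k : ℕ) : ℝ :=
  f * k + (∑ i ∈ Icc 1 k, (b i)⁻¹)⁻¹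

def prefixX (b : ℕ → ℝ) (k : ℕ) (i : ℕ) : ℝ :=
  if i ∈ Icc 1 k then (b i)⁻¹ / ∑ j ∈ Icc 1 k, (b j)⁻¹ else 0

def prefixY (k : ℕ) (i : ℕ) : ℝ :=
  if i ≤ k then 1 else 0

theorem inv_sum_inv_le_sum_mul_sq {ι : Type*} (S : Finset ι) {b x : ι → ℝ}
    (hb : ∀ i ∈ S, 0 < b i) (hx : ∑ i ∈ S, x i = 1) :
    (∑ i ∈ S, (b i)⁻¹)⁻¹ ≤ ∑ i ∈ S, b i * x i ^ 2 := by
  have := sq_sum_div_le_sum_sq_div S x (g := fun i => (b i)⁻¹) fun i hi => inv_pos.2 (hb i hi)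
  simpa [hx, div_inv_eq_mul, mul_comm] using this

theorem sum_mul_sq_div_sum_inv {ι : Type*} (S : Finset ι) {b : ι → ℝ}
    (hb : ∀ i ∈ S, b i ≠ 0) :
    ∑ i ∈ S, b i * ((b i)⁻¹ / ∑ j ∈ S, (b j)⁻¹) ^ 2 = (∑ i ∈ S, (b i)⁻¹)⁻¹ := by
  set H := ∑ j ∈ S, (b j)⁻¹
  calc ∑ i ∈ S, b i * ((b i)⁻¹ / H) ^ 2 = H / H ^ 2 := by
        rw [sum_div]
        refine sum_congr rfl fun i hi => ?_
        field_simp [hb i hi]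
    _ = H⁻¹ := by rw [sq, div_self_mul_self']

theorem sum_le_sum_Icc_card_of_antitoneOn {M : Type*} [AddCommMonoid M] [PartialOrder M]
    [IsOrderedAddMonoid M] {c : ℕ → M} {q : ℕ} (hc : AntitoneOn c (Icc 1 q))
    {S : Finset ℕ} (hS : S ⊆ Icc 1 q) :
    ∑ i ∈ S, c i ≤ ∑ i ∈ Icc 1 #S, c i := by
  induction S using Finset.induction_on_max with
  | empty => simp
  | insert a s hlt ih =>
    have ha : a ∈ Icc 1 q := hS (mem_insert_self a s)
    have has : a ∉ s := fun h => lt_irrefl a (hlt a h)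
    have hcard : #s + 1 ≤ a := by
      have : s ⊆ Ico 1 a := fun i hi =>
        mem_Ico.2 ⟨(mem_Icc.1 (hS (mem_insert_of_mem hi))).1, hlt i hi⟩
      have := card_le_card this
      rw [Nat.card_Ico] at this
      have := (mem_Icc.1 ha).1
      omega
    rw [sum_insert has, card_insert_of_notMem has, sum_Icc_succ_top (by omega),
      add_comm (∑ i ∈ Icc 1 #s, c i)]
    exact add_le_add (hc (mem_Icc.2 ⟨by omega, hcard.trans (mem_Icc.1 ha).2⟩) ha hcard)
      (ih ((subset_insert a s).trans hS))

section Feasible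

variable {q : ℕ} {x y : ℕ → ℝ}

theorem selected_subset : selected q y ⊆ Icc 1 q :=
  filter_subset _ _

theorem sum_selected_eq_one (h : IsFeasible q x y) : ∑ i ∈ selected q y, x i = 1 := by
  rw [sum_subset selected_subset, h.2]
  intro i hi hns
  obtain ⟨hx0, hxy, hy⟩ := h.1 i hi
  rcases hy with hy | hy
  · linarith
  · exact absurd (mem_filter.2 ⟨hi, hy⟩) hns

theorem selected_nonempty (h : IsFeasible q x y) : (selected q y).Nonempty := by
  by_contra hS
  simpa [not_nonempty_iff_eq_empty.1 hS] using sum_selected_eq_one h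

theorem card_selected_le_sum (h : IsFeasible q x y) :
    (#(selected q y) : ℝ) ≤ ∑ i ∈ Icc 1 q, y i := by
  calc (#(selected q y) : ℝ) = ∑ i ∈ selected q y, (1 : ℝ) := by simp
    _ = ∑ i ∈ selected q y, y i := sum_congr rfl fun i hi => (mem_filter.1 hi).2.symm
    _ ≤ ∑ i ∈ Icc 1 q, y i := by
        refine sum_le_sum_of_subset_of_nonneg selected_subset fun i hi _ => ?_
        rcases (h.1 i hi).2.2 with hy | hy <;> simp [hy]

theorem le_cost_of_isFeasible {f : ℝ} {b : ℕ → ℝ} (hf : 0 ≤ f)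
    (hb : ∀ i ∈ Icc 1 q, 0 < b i) (h : IsFeasible q x y) :
    f * #(selected q y) + (∑ i ∈ selected q y, (b i)⁻¹)⁻¹ ≤ cost q f b x y := by
  have hvar := inv_sum_inv_le_sum_mul_sq (selected q y)
    (fun i hi => hb i (selected_subset hi)) (sum_selected_eq_one h)
  have hsub : ∑ i ∈ selected q y, b i * x i ^ 2 ≤ ∑ i ∈ Icc 1 q, b i * x i ^ 2 :=
    sum_le_sum_of_subset_of_nonneg selected_subset fun i hi _ => by
      have := hb i hi; positivity
  have hfix := mul_le_mul_of_nonneg_left (card_selected_le_sum h) hf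
  rw [cost, sum_add_distrib, ← mul_sum]
  linarith

theorem prefixValue_card_selected_le_cost {f : ℝ} {b : ℕ → ℝ} (hf : 0 ≤ f)
    (hb : ∀ i ∈ Icc 1 q, 0 < b i) (hbmono : MonotoneOn b (Icc 1 q))
    (h : IsFeasible q x y) :
    prefixValue f b #(selected q y) ≤ cost q f b x y := by
  have hpos : 0 < ∑ i ∈ selected q y, (b i)⁻¹ :=
    sum_pos (fun i hi => inv_pos.2 (hb i (selected_subset hi))) (selected_nonempty h)
  have hinv : AntitoneOn (fun i => (b i)⁻¹) (Icc 1 q) := fun i hi j hj hij =>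
    inv_anti₀ (hb i hi) (hbmono hi hj hij)
  have hprefix := sum_le_sum_Icc_card_of_antitoneOn hinv (selected_subset (y := y))
  calc prefixValue f b #(selected q y)
      ≤ f * #(selected q y) + (∑ i ∈ selected q y, (b i)⁻¹)⁻¹ := by
        unfold prefixValue; gcongr
    _ ≤ cost q f b x y := le_cost_of_isFeasible hf hb h

end Feasible

section Prefix

variable {q k i : ℕ} {b : ℕ → ℝ}

theorem prefixX_of_mem (hi : i ∈ Icc 1 k) :
    prefixX b k i = (b i)⁻¹ / ∑ j ∈ Icc 1 k, (b j)⁻¹ :=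
  if_pos hi

theorem prefixX_of_notMem (hi : i ∉ Icc 1 k) : prefixX b k i = 0 :=
  if_neg hi

theorem prefixY_of_le (hi : i ≤ k) : prefixY k i = 1 :=
  if_pos hi

theorem prefixY_of_lt (hi : k < i) : prefixY k i = 0 :=
  if_neg (not_le.2 hi)

theorem isFeasible_prefix (hk : 1 ≤ k) (hkq : k ≤ q) (hb : ∀ i ∈ Icc 1 q, 0 < b i) :
    IsFeasible q (prefixX b k) (prefixY k) := by
  have hbk : ∀ i ∈ Icc 1 k, 0 < b i := fun i hi =>
    hb i (Icc_subset_Icc_right hkq hi)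
  have hH : 0 < ∑ j ∈ Icc 1 k, (b j)⁻¹ :=
    sum_pos (fun i hi => inv_pos.2 (hbk i hi)) ⟨1, mem_Icc.2 ⟨le_rfl, hk⟩⟩
  refine ⟨fun i hi => ?_, ?_⟩
  · by_cases hik : i ∈ Icc 1 k
    · have hle : (b i)⁻¹ ≤ ∑ j ∈ Icc 1 k, (b j)⁻¹ :=
        single_le_sum (fun j hj => (inv_pos.2 (hbk j hj)).le) hik
      have hbi := hbk i hik
      rw [prefixX_of_mem hik, prefixY_of_le (mem_Icc.1 hik).2]
      exact ⟨by positivity, (div_le_one hH).2 hle, Or.inr rfl⟩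
    · have hki : k < i := by grind
      simp [prefixX_of_notMem hik, prefixY_of_lt hki]
  · rw [← sum_subset (Icc_subset_Icc_right hkq) fun i _ hi => prefixX_of_notMem hi,
      sum_congr rfl fun i hi => prefixX_of_mem hi, ← sum_div, div_self hH.ne']

theorem cost_prefix (hkq : k ≤ q) (hb : ∀ i ∈ Icc 1 q, 0 < b i) (f : ℝ) :
    cost q f b (prefixX b k) (prefixY k) = prefixValue f b k := by
  have hbk : ∀ i ∈ Icc 1 k, 0 < b i := fun i hi =>
    hb i (Icc_subset_Icc_right hkq hi)
  rw [cost, ← sum_subset (Icc_subset_Icc_right hkq)]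
  · calc ∑ i ∈ Icc 1 k, (f * prefixY k i + b i * prefixX b k i ^ 2)
        = ∑ i ∈ Icc 1 k, (f + b i * ((b i)⁻¹ / ∑ j ∈ Icc 1 k, (b j)⁻¹) ^ 2) :=
          sum_congr rfl fun i hi => by
            rw [prefixY_of_le (mem_Icc.1 hi).2, prefixX_of_mem hi, mul_one]
      _ = prefixValue f b k := by
          rw [sum_add_distrib, sum_mul_sq_div_sum_inv _ fun i hi => (hbk i hi).ne']
          simp [prefixValue, mul_comm]
  · intro i hi hik
    have hki : k < i := by grind
    simp [prefixX_of_notMem hik, prefixY_of_lt hki]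

end Prefix

end DiscSelection

end

open DiscSelection in
theorem prefix_set_optimal
    (q : ℕ) (hq : 1 ≤ q) (b : ℕ → ℝ) (f : ℝ) (hf : 0 ≤ f)
    (hb : ∀ i ∈ Finset.Icc 1 q, 0 < b i)
    (hbmono : ∀ i j, 1 ≤ i → i ≤ j → j ≤ q → b i ≤ b j) :
    ∃ (x y : ℕ → ℝ) (k : ℕ),
      (∀ i ∈ Finset.Icc 1 q, 0 ≤ x i ∧ x i ≤ y i ∧ (y i = 0 ∨ y i = 1)) ∧
      (∑ i ∈ Finset.Icc 1 q, x i = 1) ∧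
      (∀ x' y' : ℕ → ℝ,
        (∀ i ∈ Finset.Icc 1 q, 0 ≤ x' i ∧ x' i ≤ y' i ∧ (y' i = 0 ∨ y' i = 1)) →
        (∑ i ∈ Finset.Icc 1 q, x' i = 1) →
        ∑ i ∈ Finset.Icc 1 q, (f * y i + b i * (x i) ^ 2) ≤
          ∑ i ∈ Finset.Icc 1 q, (f * y' i + b i * (x' i) ^ 2)) ∧
      k ≤ q ∧ (∀ i ∈ Finset.Icc 1 q, y i = 1 ↔ i ≤ k) := by
  have hbmono' : MonotoneOn b (Icc 1 q) := fun i hi j hj hij =>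
    hbmono i j (mem_Icc.1 hi).1 hij (mem_Icc.1 hj).2
  obtain ⟨k, hk, hkmin⟩ :=
    (Icc 1 q).exists_min_image (prefixValue f b) ⟨1, mem_Icc.2 ⟨le_rfl, hq⟩⟩
  have hkq : k ≤ q := (mem_Icc.1 hk).2
  obtain ⟨hfeas, hsum⟩ := isFeasible_prefix (mem_Icc.1 hk).1 hkq hb
  refine ⟨prefixX b k, prefixY k, k, hfeas, hsum, fun x' y' h₁ h₂ => ?_, hkq,
    fun i _ => by by_cases hik : i ≤ k <;> simp [prefixY, hik]⟩
  have h' : IsFeasible q x' y' := ⟨h₁, h₂⟩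
  have hcard : #(selected q y') ∈ Icc 1 q :=
    mem_Icc.2 ⟨card_pos.2 (selected_nonempty h'), by simpa using card_le_card selected_subset⟩
  calc cost q f b (prefixX b k) (prefixY k) = prefixValue f b k := cost_prefix hkq hb f
    _ ≤ prefixValue f b #(selected q y') := hkmin _ hcard
    _ ≤ cost q f b x' y' := prefixValue_card_selected_le_cost hf hb hbmono' h'
end

section
/- Dominance: if disc i dominates disc j (bᵢ ≤ bⱼ, fᵢ ≤ fⱼ) and some feasible solution of P uses disc j but not disc i, then swapping j for i (setting yᵢ = 1, xᵢ = xⱼ, yⱼ = 0, xⱼ = 0) yields a feasible solution with cost no greater. -/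
open Finset

theorem dominance_swap
    {ι : Type*} [Fintype ι] [DecidableEq ι]
    (f b : ι → ℝ) (hf : ∀ t, 0 ≤ f t) (hb : ∀ t, 0 < b t)
    (x y : ι → ℝ)
    (hy : ∀ t, y t = 0 ∨ y t = 1)
    (hx0 : ∀ t, 0 ≤ x t) (hxy : ∀ t, x t ≤ y t) (hsum : ∑ t, x t = 1)
    (i j : ι) (hdomb : b i ≤ b j) (hdomf : f i ≤ f j)
    (hyj : y j = 1) (hyi : y i = 0)
    (x' y' : ι → ℝ)
    (hx' : x' = fun t => if t = i then x j else if t = j then 0 else x t)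
    (hy' : y' = fun t => if t = i then 1 else if t = j then 0 else y t) :
    (∀ t, 0 ≤ x' t) ∧ (∀ t, x' t ≤ y' t) ∧ (∀ t, y' t = 0 ∨ y' t = 1) ∧
    (∑ t, x' t = 1) ∧
    ∑ t, (f t * y' t + b t * (x' t) ^ 2) ≤ ∑ t, (f t * y t + b t * (x t) ^ 2) := by
  have hij : i ≠ j := fun h => by simp [h, hyj] at hyi
  have hxi : x i = 0 := le_antisymm (by rw [← hyi] at *; exact hxy i) (hx0 i)
  have key : ∀ (h : ι → ℝ), ∑ t, h t = h i + h j + ∑ t ∈ univ \ {i, j}, h t := by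
    intro h
    rw [← Finset.sum_sdiff (Finset.subset_univ {i, j}), Finset.sum_pair hij]
    ring
  have hrest : ∀ t ∈ univ \ ({i, j} : Finset ι), x' t = x t ∧ y' t = y t := by
    intro t ht
    simp only [Finset.mem_sdiff, Finset.mem_insert, Finset.mem_singleton] at ht
    push_neg at ht
    simp [hx', hy', ht.2.1, ht.2.2]
  refine ⟨?_, ?_, ?_, ?_, ?_⟩
  · intro t
    subst hx'
    by_cases h1 : t = i <;> by_cases h2 : t = j <;> simp [h1, h2, hx0, hij.symm]
  · intro t
    have hxj1 : x j ≤ 1 := hyj ▸ hxy j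
    subst hx' hy'
    by_cases h1 : t = i <;> by_cases h2 : t = j <;> simp [h1, h2, hxy, hij.symm, hxj1]
  · intro t
    subst hy'
    by_cases h1 : t = i <;> by_cases h2 : t = j <;> simp [h1, h2, hy, hij.symm]
  · rw [key x', key x] at *
    have h1 : x' i = x j := by simp [hx']
    have h2 : x' j = 0 := by simp [hx', hij.symm]
    have h3 : ∑ t ∈ univ \ ({i, j} : Finset ι), x' t = ∑ t ∈ univ \ ({i, j} : Finset ι), x t :=
      Finset.sum_congr rfl fun t ht => (hrest t ht).1
    rw [h1, h2, h3]
    rw [hxi] at hsum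
    linarith
  · rw [key (fun t => f t * y' t + b t * (x' t) ^ 2), key (fun t => f t * y t + b t * (x t) ^ 2)]
    have h3 : ∑ t ∈ univ \ ({i, j} : Finset ι), (f t * y' t + b t * (x' t) ^ 2)
        = ∑ t ∈ univ \ ({i, j} : Finset ι), (f t * y t + b t * (x t) ^ 2) :=
      Finset.sum_congr rfl fun t ht => by rw [(hrest t ht).1, (hrest t ht).2]
    have hxj2 : 0 ≤ (x j) ^ 2 := sq_nonneg _
    have e1 : x' i = x j := by simp [hx']
    have e2 : x' j = 0 := by simp [hx', hij.symm]
    have e3 : y' i = 1 := by simp [hy']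
    have e4 : y' j = 0 := by simp [hy', hij.symm]
    simp only [e1, e2, e3, e4, hyi, hyj, hxi, h3]
    have : b i * x j ^ 2 ≤ b j * x j ^ 2 := mul_le_mul_of_nonneg_right hdomb hxj2
    nlinarith
end
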